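/- Let n ≥ 3, m ≥ 1, and 0 < μ ≤ m/(2(m+2)). There exists a constant C_μ > 0 such that for all A ≥ 1, ∫₁^A ρ^(-(m+2)μ - 1) dρ ≤ C_μ, and consequently ∫₀¹ (1+Sr)^(-(n-1)/2 - m/(2(m+2))) r^(n/2 - 1 - 1/(m+2) - μ) dr ≤ C_μ · S^(-(n-1)/2 - m/(2(m+2)) + μ) for all S ≥ 1. -/
import Mathlib


/-- The computation (4.65): for `0 < μ ≤ m/(2(m+2))` there is `C_μ > 0` such that
`∫₁^A ρ^(-(m+2)μ-1) dρ ≤ C_μ` for all `A ≥ 1`, and consequently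
`∫₀¹ (1+Sr)^(-(n-1)/2 - m/(2(m+2))) r^(n/2-1-1/(m+2)-μ) dr ≤ C_μ S^(-(n-1)/2 - m/(2(m+2)) + μ)`
for all `S ≥ 1`. -/
theorem stmt_12 (m n : ℕ) (hm : 1 ≤ m) (hn : 3 ≤ n) (μ : ℝ) (hμ : 0 < μ)
    (hμ' : μ ≤ (m : ℝ) / (2 * ((m : ℝ) + 2))) :
    ∃ C > 0,
      (∀ A : ℝ, 1 ≤ A → (∫ ρ in (1 : ℝ)..A, ρ ^ (-(((m : ℝ) + 2) * μ) - 1)) ≤ C) ∧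
      (∀ S : ℝ, 1 ≤ S →
        (∫ r in (0 : ℝ)..1,
            (1 + S * r) ^ (-(((n : ℝ) - 1) / 2) - (m : ℝ) / (2 * ((m : ℝ) + 2)))
              * r ^ ((n : ℝ) / 2 - 1 - 1 / ((m : ℝ) + 2) - μ))
          ≤ C * S ^ (-(((n : ℝ) - 1) / 2) - (m : ℝ) / (2 * ((m : ℝ) + 2)) + μ)) := by
  have hM : (1:ℝ) ≤ (m:ℝ) := by exact_mod_cast hm
  have hN : (3:ℝ) ≤ (n:ℝ) := by exact_mod_cast hn
  have hM2 : (0:ℝ) < (m:ℝ) + 2 := by linarith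
  have hM2' : ((m:ℝ) + 2) ≠ 0 := ne_of_gt hM2
  have hhalf : 1/((m:ℝ)+2) + (m:ℝ)/(2*((m:ℝ)+2)) = 1/2 := by field_simp; ring
  set c : ℝ := (n:ℝ)/2 - 1 - 1/((m:ℝ)+2) - μ with hc
  have hc0 : 0 ≤ c := by rw [hc]; linarith
  refine ⟨1/μ, by positivity, ?_, ?_⟩
  · intro A hA
    have hA0 : (0:ℝ) < A := lt_of_lt_of_le one_pos hA
    have hx : (0:ℝ) < ((m:ℝ)+2)*μ := by positivity
    rw [integral_rpow (Or.inr ⟨by intro h; simp at h; rcases h with h | h <;> linarith,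
      Set.notMem_uIcc_of_lt one_pos hA0⟩)]
    have hexp : -(((m:ℝ)+2)*μ) - 1 + 1 = -(((m:ℝ)+2)*μ) := by ring
    rw [hexp, Real.one_rpow]
    have ht1 : A ^ (-(((m:ℝ)+2)*μ)) ≤ 1 :=
      Real.rpow_le_one_of_one_le_of_nonpos hA (by linarith)
    have ht0 : 0 ≤ A ^ (-(((m:ℝ)+2)*μ)) := Real.rpow_nonneg hA0.le _
    rw [div_neg, ← neg_div, neg_sub]
    calc (1 - A ^ (-(((m:ℝ)+2)*μ))) / (((m:ℝ)+2)*μ) ≤ 1 / (((m:ℝ)+2)*μ) := by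
          gcongr; linarith
      _ ≤ 1 / μ := by
          apply one_div_le_one_div_of_le hμ; nlinarith
  · intro S hS
    have hS0 : (0:ℝ) < S := lt_of_lt_of_le one_pos hS
    set bb : ℝ := -(((n:ℝ) - 1)/2) - (m:ℝ)/(2*((m:ℝ)+2)) with hbb
    have hbbe : bb = -1 - μ - c := by rw [hbb, hc]; linarith
    -- pointwise bound
    have hpt : ∀ r ∈ Set.Icc (0:ℝ) 1,
        (1 + S * r) ^ bb * r ^ c ≤ S ^ (-c) * (fun x : ℝ => x ^ (-1-μ)) (S * r + 1) := by
      intro r hr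
      obtain ⟨hr0, hr1⟩ := hr
      have h1 : (0:ℝ) < 1 + S * r := by nlinarith
      have key : S ^ c * r ^ c ≤ (1 + S * r) ^ c := by
        rw [← Real.mul_rpow hS0.le hr0]
        exact Real.rpow_le_rpow (by positivity) (by linarith) hc0
      have key2 : (1 + S * r) ^ (-c) * r ^ c ≤ S ^ (-c) := by
        rw [Real.rpow_neg h1.le, Real.rpow_neg hS0.le, inv_eq_one_div, inv_eq_one_div,
          div_mul_eq_mul_div, div_le_div_iff₀ (Real.rpow_pos_of_pos h1 c)
            (Real.rpow_pos_of_pos hS0 c)]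
        nlinarith [key]
      calc (1 + S * r) ^ bb * r ^ c
          = (1 + S * r) ^ (-1-μ) * ((1 + S * r) ^ (-c) * r ^ c) := by
            rw [hbbe, show (-1 - μ - c : ℝ) = (-1-μ) + (-c) by ring, Real.rpow_add h1]; ring
        _ ≤ (1 + S * r) ^ (-1-μ) * S ^ (-c) :=
            mul_le_mul_of_nonneg_left key2 (Real.rpow_nonneg h1.le _)
        _ = S ^ (-c) * (fun x : ℝ => x ^ (-1-μ)) (S * r + 1) := by
            simp only [add_comm, mul_comm]
    -- integrability
    have hint_rc : IntervalIntegrable (fun r : ℝ => r ^ c) MeasureTheory.volume 0 1 :=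
      intervalIntegral.intervalIntegrable_rpow (Or.inl hc0)
    have hcont : ContinuousOn (fun r : ℝ => (1 + S * r) ^ bb) (Set.uIcc (0:ℝ) 1) := by
      apply ContinuousOn.rpow_const
      · exact (continuous_const.add (continuous_const.mul continuous_id)).continuousOn
      · intro x hx
        rw [Set.uIcc_of_le zero_le_one] at hx
        exact Or.inl (by nlinarith [hx.1, hS0])
    have hf_int : IntervalIntegrable (fun r : ℝ => (1 + S * r) ^ bb * r ^ c)
        MeasureTheory.volume 0 1 := hint_rc.continuousOn_mul hcont
    have hg_int : IntervalIntegrable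
        (fun r : ℝ => S ^ (-c) * (fun x : ℝ => x ^ (-1-μ)) (S * r + 1))
        MeasureTheory.volume 0 1 := by
      apply ContinuousOn.intervalIntegrable
      apply ContinuousOn.mul continuousOn_const
      apply ContinuousOn.rpow_const
      · exact ((continuous_const.mul continuous_id).add continuous_const).continuousOn
      · intro x hx
        rw [Set.uIcc_of_le zero_le_one] at hx
        exact Or.inl (by nlinarith [hx.1, hS0])
    have h2 := intervalIntegral.integral_mono_on zero_le_one hf_int hg_int hpt
    -- compute the right-hand integral
    have h3 : (∫ r in (0:ℝ)..1, S ^ (-c) * (fun x : ℝ => x ^ (-1-μ)) (S * r + 1))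
        = S ^ (-c) * (S⁻¹ * ∫ x in (1:ℝ)..(S+1), x ^ (-1-μ)) := by
      rw [intervalIntegral.integral_const_mul,
        intervalIntegral.integral_comp_mul_add (fun x : ℝ => x ^ (-1-μ)) hS0.ne' 1]
      norm_num
    have h4 : (∫ x in (1:ℝ)..(S+1), x ^ (-1-μ)) ≤ 1/μ := by
      rw [integral_rpow (Or.inr ⟨by intro h; nlinarith,
        Set.notMem_uIcc_of_lt one_pos (by linarith)⟩)]
      have hexp : (-1 - μ + 1 : ℝ) = -μ := by ring
      rw [hexp, Real.one_rpow]
      have ht1 : (S+1) ^ (-μ : ℝ) ≤ 1 :=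
        Real.rpow_le_one_of_one_le_of_nonpos (by linarith) (by linarith)
      have ht0 : (0:ℝ) ≤ (S+1) ^ (-μ : ℝ) := Real.rpow_nonneg (by linarith) _
      rw [div_neg, ← neg_div, neg_sub]
      gcongr; linarith
    have h5 : (0:ℝ) ≤ ∫ x in (1:ℝ)..(S+1), x ^ (-1-μ) := by
      apply intervalIntegral.integral_nonneg (by linarith)
      intro x hx
      exact Real.rpow_nonneg (by linarith [hx.1]) _
    have hpow : S ^ (-c) * S⁻¹ = S ^ (bb + μ) := by
      rw [show bb + μ = -c + (-1) by rw [hbbe]; ring, Real.rpow_add hS0,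
        Real.rpow_neg_one]
    calc (∫ r in (0:ℝ)..1, (1 + S * r) ^ bb * r ^ c)
        ≤ S ^ (-c) * (S⁻¹ * ∫ x in (1:ℝ)..(S+1), x ^ (-1-μ)) := by rw [← h3]; exact h2
      _ ≤ S ^ (-c) * (S⁻¹ * (1/μ)) := by
          apply mul_le_mul_of_nonneg_left _ (Real.rpow_nonneg hS0.le _)
          exact mul_le_mul_of_nonneg_left h4 (inv_nonneg.mpr hS0.le)
      _ = 1/μ * S ^ (bb + μ) := by rw [← hpow]; ring
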